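/- arXiv:1903.01615 — 5 statements merged into one kernel-verified Lean document; each statement's English description precedes it below -/
import Mathlib

section
/- Let λ ∈ ℂ with λ ≠ e_x, and suppose Ψ : ℤ → ℂ³ satisfies the eigenvalue equations λΨ^L(x) = a_{x+1}Ψ^L(x+1) + b_{x+1}Ψ^O(x+1) + c_{x+1}Ψ^R(x+1), λΨ^O(x) = d_xΨ^L(x) + e_xΨ^O(x) + f_xΨ^R(x), λΨ^R(x) = g_{x-1}Ψ^L(x-1) + h_{x-1}Ψ^O(x-1) + i_{x-1}Ψ^R(x-1). If f_x ≠ 0 and hₓfₓ + iₓ(λ − eₓ) ≠ 0, then Ψ^O(x) = −(a_{x+1}(f_xg_x − i_xd_x))/(λ(h_xf_x + i_x(λ−e_x))) Ψ^L(x+1) − (b_{x+1}(f_xg_x − i_xd_x))/(λ(h_xf_x + i_x(λ−e_x))) Ψ^O(x+1) + (λ²f_x − c_{x+1}(f_xg_x − i_xd_x))/(λ(h_xf_x + i_x(λ−e_x))) Ψ^R(x+1), where λ ≠ 0. -/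
/-- With `ψR'` standing for `ΨR (x + 1)`, the right equation at `x + 1` and the middle equation
at `x` combine to eliminate `ΨR x`. -/
theorem mul_middle_eq_of_middle_and_right_eq {R : Type*} [CommRing R]
    {lam d e f g h i ψL ψO ψR ψR' : R}
    (hO : lam * ψO = d * ψL + e * ψO + f * ψR)
    (hR : lam * ψR' = g * ψL + h * ψO + i * ψR) :
    (h * f + i * (lam - e)) * ψO = lam * f * ψR' - (f * g - i * d) * ψL := by
  linear_combination i * hO - f * hR

theorem three_state_qw_middle_component_backward_general
    (a b c d e f g h i : ℤ → ℂ) (lam : ℂ)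
    (ΨL ΨO ΨR : ℤ → ℂ)
    (hL : ∀ x : ℤ, lam * ΨL x =
      a (x+1) * ΨL (x+1) + b (x+1) * ΨO (x+1) + c (x+1) * ΨR (x+1))
    (hO : ∀ x : ℤ, lam * ΨO x = d x * ΨL x + e x * ΨO x + f x * ΨR x)
    (hR : ∀ x : ℤ, lam * ΨR x =
      g (x-1) * ΨL (x-1) + h (x-1) * ΨO (x-1) + i (x-1) * ΨR (x-1))
    (x : ℤ) (hlam : lam ≠ 0)
    (hden : h x * f x + i x * (lam - e x) ≠ 0) :
    ΨO x =
      -(a (x+1) * (f x * g x - i x * d x)) / (lam * (h x * f x + i x * (lam - e x))) * ΨL (x+1)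
      - b (x+1) * (f x * g x - i x * d x) / (lam * (h x * f x + i x * (lam - e x))) * ΨO (x+1)
      + (lam ^ 2 * f x - c (x+1) * (f x * g x - i x * d x)) /
          (lam * (h x * f x + i x * (lam - e x))) * ΨR (x+1) := by
  have hR_succ := hR (x + 1)
  rw [add_sub_cancel_right] at hR_succ
  have helim := mul_middle_eq_of_middle_and_right_eq (hO x) hR_succ
  -- keeps the denominator atomic, so that `field_simp` recognises it from `hden`
  set N := h x * f x + i x * (lam - e x)
  field_simp
  linear_combination lam * helim - (f x * g x - i x * d x) * hL x

theorem three_state_qw_middle_component_backward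
    (a b c d e f g h i : ℤ → ℂ) (lam : ℂ)
    (ΨL ΨO ΨR : ℤ → ℂ)
    (hL : ∀ x : ℤ, lam * ΨL x =
      a (x+1) * ΨL (x+1) + b (x+1) * ΨO (x+1) + c (x+1) * ΨR (x+1))
    (hO : ∀ x : ℤ, lam * ΨO x = d x * ΨL x + e x * ΨO x + f x * ΨR x)
    (hR : ∀ x : ℤ, lam * ΨR x =
      g (x-1) * ΨL (x-1) + h (x-1) * ΨO (x-1) + i (x-1) * ΨR (x-1))
    (x : ℤ) (hlam : lam ≠ 0) (hle : lam ≠ e x) (hf : f x ≠ 0)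
    (hden : h x * f x + i x * (lam - e x) ≠ 0) :
    ΨO x =
      -(a (x+1) * (f x * g x - i x * d x)) / (lam * (h x * f x + i x * (lam - e x))) * ΨL (x+1)
      - b (x+1) * (f x * g x - i x * d x) / (lam * (h x * f x + i x * (lam - e x))) * ΨO (x+1)
      + (lam ^ 2 * f x - c (x+1) * (f x * g x - i x * d x)) /
          (lam * (h x * f x + i x * (lam - e x))) * ΨR (x+1) :=
  three_state_qw_middle_component_backward_general a b c d e f g h i lam ΨL ΨO ΨR hL hO hR x hlam
    hden
end

section
/- Under the same hypotheses (eigenvalue equations for the three-state QW, λ ≠ 0, h_xf_x + i_x(λ−e_x) ≠ 0), the right component satisfies Ψ^R(x) = −(a_{x+1}(h_xd_x + g_x(λ−e_x)))/(λ(h_xf_x + i_x(λ−e_x))) Ψ^L(x+1) − (b_{x+1}(h_xd_x + g_x(λ−e_x)))/(λ(h_xf_x + i_x(λ−e_x))) Ψ^O(x+1) + ((λ−e_x)(λ² − g_xc_{x+1}) − h_xc_{x+1}d_x)/(λ(h_xf_x + i_x(λ−e_x))) Ψ^R(x+1). -/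
theorem three_state_qw_right_component_backward
    (a b c d e f g h i : ℤ → ℂ) (lam : ℂ)
    (ΨL ΨO ΨR : ℤ → ℂ)
    (hL : ∀ x : ℤ, lam * ΨL x =
      a (x+1) * ΨL (x+1) + b (x+1) * ΨO (x+1) + c (x+1) * ΨR (x+1))
    (hO : ∀ x : ℤ, lam * ΨO x = d x * ΨL x + e x * ΨO x + f x * ΨR x)
    (hR : ∀ x : ℤ, lam * ΨR x =
      g (x-1) * ΨL (x-1) + h (x-1) * ΨO (x-1) + i (x-1) * ΨR (x-1))
    (x : ℤ) (hlam : lam ≠ 0)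
    (hden : h x * f x + i x * (lam - e x) ≠ 0) :
    ΨR x =
      -(a (x+1) * (h x * d x + g x * (lam - e x))) /
          (lam * (h x * f x + i x * (lam - e x))) * ΨL (x+1)
      - b (x+1) * (h x * d x + g x * (lam - e x)) /
          (lam * (h x * f x + i x * (lam - e x))) * ΨO (x+1)
      + ((lam - e x) * (lam ^ 2 - g x * c (x+1)) - h x * c (x+1) * d x) /
          (lam * (h x * f x + i x * (lam - e x))) * ΨR (x+1) := by
  have hR' : lam * ΨR (x+1) = g x * ΨL x + h x * ΨO x + i x * ΨR x := by
    simpa using hR (x+1)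
  set D := h x * f x + i x * (lam - e x)
  -- ΨO x drops out of the R-equation at x+1 once the O-equation at x is used
  have hΨR : D * ΨR x =
      lam * (lam - e x) * ΨR (x+1) - (h x * d x + g x * (lam - e x)) * ΨL x := by
    linear_combination -(lam - e x) * hR' - h x * hO x
  field_simp
  linear_combination lam * hΨR - (h x * d x + g x * (lam - e x)) * hL x
end

section
/- Under the eigenvalue equations for the three-state QW, if λ ≠ 0 and a_x(λ−e_x) + b_xd_x ≠ 0, then Ψ^L(x) = ((λ−e_x)(λ² − g_{x-1}c_x) − g_{x-1}b_xf_x)/(λ(a_x(λ−e_x) + b_xd_x)) Ψ^L(x−1) − (h_{x-1}(b_xf_x + c_x(λ−e_x)))/(λ(a_x(λ−e_x) + b_xd_x)) Ψ^O(x−1) − (i_{x-1}(b_xf_x + c_x(λ−e_x)))/(λ(a_x(λ−e_x) + b_xd_x)) Ψ^R(x−1). -/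
/-!
Eliminate `Ψ^O(x)` with the `O`-equation at `x` and then `Ψ^R(x)` with the `R`-equation at `x`;
the `L`-equation at `x - 1` becomes linear in `Ψ^L(x)` with coefficient `λ (a_x(λ - e_x) + b_x d_x)`.
-/

section LocalTransfer

variable {R : Type*} [CommRing R] {lam a b c d e f g h i ψL ψO ψR ψL' ψO' ψR' : R}

theorem center_eliminated_of_coin_eqs
    (hL : lam * ψL' = a * ψL + b * ψO + c * ψR) (hO : lam * ψO = d * ψL + e * ψO + f * ψR) :
    (lam - e) * (lam * ψL') = (a * (lam - e) + b * d) * ψL + (b * f + c * (lam - e)) * ψR := by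
  linear_combination (lam - e) * hL + b * hO

theorem left_transfer_of_coin_eqs
    (hL : lam * ψL' = a * ψL + b * ψO + c * ψR) (hO : lam * ψO = d * ψL + e * ψO + f * ψR)
    (hR : lam * ψR = g * ψL' + h * ψO' + i * ψR') :
    lam * (a * (lam - e) + b * d) * ψL =
      ((lam - e) * (lam ^ 2 - g * c) - g * b * f) * ψL'
        - h * (b * f + c * (lam - e)) * ψO' - i * (b * f + c * (lam - e)) * ψR' := by
  linear_combination (-lam) * center_eliminated_of_coin_eqs hL hO
    - (b * f + c * (lam - e)) * hR

end LocalTransfer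

theorem three_state_qw_left_component_forward
    (a b c d e f g h i : ℤ → ℂ) (lam : ℂ)
    (ΨL ΨO ΨR : ℤ → ℂ)
    (hL : ∀ x : ℤ, lam * ΨL x =
      a (x+1) * ΨL (x+1) + b (x+1) * ΨO (x+1) + c (x+1) * ΨR (x+1))
    (hO : ∀ x : ℤ, lam * ΨO x = d x * ΨL x + e x * ΨO x + f x * ΨR x)
    (hR : ∀ x : ℤ, lam * ΨR x =
      g (x-1) * ΨL (x-1) + h (x-1) * ΨO (x-1) + i (x-1) * ΨR (x-1))
    (x : ℤ) (hlam : lam ≠ 0)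
    (hden : a x * (lam - e x) + b x * d x ≠ 0) :
    ΨL x =
      ((lam - e x) * (lam ^ 2 - g (x-1) * c x) - g (x-1) * b x * f x) /
          (lam * (a x * (lam - e x) + b x * d x)) * ΨL (x-1)
      - h (x-1) * (b x * f x + c x * (lam - e x)) /
          (lam * (a x * (lam - e x) + b x * d x)) * ΨO (x-1)
      - i (x-1) * (b x * f x + c x * (lam - e x)) /
          (lam * (a x * (lam - e x) + b x * d x)) * ΨR (x-1) := by
  have hLprev := hL (x - 1)
  rw [sub_add_cancel] at hLprev
  have key := left_transfer_of_coin_eqs hLprev (hO x) (hR x)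
  have hne : lam * (a x * (lam - e x) + b x * d x) ≠ 0 := mul_ne_zero hlam hden
  rw [div_mul_eq_mul_div, div_mul_eq_mul_div, div_mul_eq_mul_div, ← sub_div, ← sub_div,
    eq_div_iff hne, ← key, mul_comm]
end

section
/- Suppose Ψ : ℤ → ℂ³ satisfies the three componentwise eigenvalue equations of a three-state QW with eigenvalue λ ≠ 0, and suppose for all y ≥ 1 the denominators a_y(λ−e_y)+b_yd_y are nonzero. Then for all x ≥ 1, Ψ(x) = T⁺_x T⁺_{x−1} ⋯ T⁺_1 Ψ(0), where T⁺_y is the 3×3 transfer matrix with rows: row 1 = (((λ−e_y)(λ²−g_{y−1}c_y)−g_{y−1}b_yf_y)/D, −h_{y−1}(b_yf_y+c_y(λ−e_y))/D, −i_{y−1}(b_yf_y+c_y(λ−e_y))/D), row 2 = ((λ²d_y+g_{y−1}(a_yf_y−c_yd_y))/D, h_{y−1}(a_yf_y−c_yd_y)/D, i_{y−1}(a_yf_y−c_yd_y)/D), row 3 = (g_{y−1}/λ, h_{y−1}/λ, i_{y−1}/λ), with D = λ(a_y(λ−e_y)+b_yd_y). -/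
/-- Forward transfer matrix `T⁺_y` of the three-state QW with coin entries
`a,…,i` and eigenvalue `lam`, with denominator `D = λ(a_y(λ−e_y)+b_yd_y)`. -/
noncomputable def transferPlus (a b c d e f g h i : ℤ → ℂ) (lam : ℂ) (y : ℤ) :
    Matrix (Fin 3) (Fin 3) ℂ :=
  !![((lam - e y) * (lam ^ 2 - g (y-1) * c y) - g (y-1) * b y * f y) /
        (lam * (a y * (lam - e y) + b y * d y)),
     -(h (y-1) * (b y * f y + c y * (lam - e y))) /
        (lam * (a y * (lam - e y) + b y * d y)),
     -(i (y-1) * (b y * f y + c y * (lam - e y))) /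
        (lam * (a y * (lam - e y) + b y * d y));
     (lam ^ 2 * d y + g (y-1) * (a y * f y - c y * d y)) /
        (lam * (a y * (lam - e y) + b y * d y)),
     h (y-1) * (a y * f y - c y * d y) / (lam * (a y * (lam - e y) + b y * d y)),
     i (y-1) * (a y * f y - c y * d y) / (lam * (a y * (lam - e y) + b y * d y));
     g (y-1) / lam, h (y-1) / lam, i (y-1) / lam]

/-- The ordered product `T⁺_n ⋯ T⁺_1` (empty product for `n = 0`). -/
noncomputable def transferProd (a b c d e f g h i : ℤ → ℂ) (lam : ℂ) :
    ℕ → Matrix (Fin 3) (Fin 3) ℂ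
  | 0 => 1
  | n + 1 => transferPlus a b c d e f g h i lam ((n : ℤ) + 1) *
      transferProd a b c d e f g h i lam n

/-! The three eigenvalue equations link `Ψ (y-1)` and `Ψ y` only. The right-mover equation at `y`
gives `Ψ^R(y)` directly from `Ψ(y-1)`; substituting it into the left-mover equation at `y-1` and
the stay equation at `y` leaves a 2×2 linear system for `Ψ^L(y), Ψ^O(y)` whose determinant is
`a_y(λ-e_y)+b_y d_y`. Solving it by Cramer's rule gives `Ψ y = T⁺_y Ψ (y-1)`, and iterating
gives the product formula. -/

lemma transferPlus_mulVec_eq {a b c d e f g h i : ℤ → ℂ} {lam : ℂ} (hlam : lam ≠ 0)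
    {y : ℤ} (hden : a y * (lam - e y) + b y * d y ≠ 0) {u v : Fin 3 → ℂ}
    (hL : lam * u 0 = a y * v 0 + b y * v 1 + c y * v 2)
    (hO : lam * v 1 = d y * v 0 + e y * v 1 + f y * v 2)
    (hR : lam * v 2 = g (y-1) * u 0 + h (y-1) * u 1 + i (y-1) * u 2) :
    (transferPlus a b c d e f g h i lam y).mulVec u = v := by
  have hden' : (lam - e y) * a y + b y * d y ≠ 0 := by rwa [mul_comm]
  have hden'' : a y * (lam - e y) + d y * b y ≠ 0 := by rwa [mul_comm (d y)]
  ext j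
  fin_cases j <;>
    simp only [transferPlus, Matrix.mulVec, dotProduct, Fin.sum_univ_three, Fin.zero_eta,
      Fin.mk_one, Fin.reduceFinMk, Fin.isValue, Matrix.of_apply, Matrix.cons_val',
      Matrix.cons_val_fin_one, Matrix.cons_val_zero, Matrix.cons_val_one, Matrix.cons_val] <;>
    field_simp
  · linear_combination (lam * (lam - e y)) * hL + (lam * b y) * hO +
      (c y * (lam - e y) + b y * f y) * hR
  · linear_combination (lam * d y) * hL - (lam * a y) * hO - (a y * f y - c y * d y) * hR
  · linear_combination -hR

lemma transferProd_mulVec_eq {a b c d e f g h i : ℤ → ℂ} {lam : ℂ} {Ψ : ℤ → Fin 3 → ℂ}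
    (hstep : ∀ n : ℕ,
      (transferPlus a b c d e f g h i lam ((n : ℤ) + 1)).mulVec (Ψ n) = Ψ ((n : ℤ) + 1))
    (n : ℕ) : (transferProd a b c d e f g h i lam n).mulVec (Ψ 0) = Ψ n := by
  induction n with
  | zero => simp [transferProd]
  | succ n ih => rw [transferProd, ← Matrix.mulVec_mulVec, ih, hstep, Nat.cast_succ]

theorem three_state_qw_transfer_matrix_product
    (a b c d e f g h i : ℤ → ℂ) (lam : ℂ) (hlam : lam ≠ 0)
    (Ψ : ℤ → Fin 3 → ℂ)
    (hL : ∀ x : ℤ, lam * Ψ x 0 =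
      a (x+1) * Ψ (x+1) 0 + b (x+1) * Ψ (x+1) 1 + c (x+1) * Ψ (x+1) 2)
    (hO : ∀ x : ℤ, lam * Ψ x 1 = d x * Ψ x 0 + e x * Ψ x 1 + f x * Ψ x 2)
    (hR : ∀ x : ℤ, lam * Ψ x 2 =
      g (x-1) * Ψ (x-1) 0 + h (x-1) * Ψ (x-1) 1 + i (x-1) * Ψ (x-1) 2)
    (hden : ∀ y : ℤ, 1 ≤ y → a y * (lam - e y) + b y * d y ≠ 0) :
    ∀ n : ℕ, 1 ≤ n →
      Ψ (n : ℤ) = (transferProd a b c d e f g h i lam n).mulVec (Ψ 0) := by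
  intro n _
  refine (transferProd_mulVec_eq (fun m => ?_) n).symm
  exact transferPlus_mulVec_eq hlam (hden _ (by omega)) (hL m) (hO _)
    (by simpa using hR (m + 1))
end

section
/- Let T⁺ be the Fourier-walk forward transfer matrix at eigenvalue λ = i, ω = e^{2πi/3}: T⁺ = [[ω,0,0],[(−ω−5)/(3ω),(1−ω)/3,(1−ω)/(3ω)],[1/(ω(1−ω)),ω/(1−ω),1/(1−ω)]]. Then (T⁺)³ applied to the vector v = (α, 0, −αω^{−2}) returns v, i.e. v is a fixed point of (T⁺)³ for every α ∈ ℂ. -/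
noncomputable def ω3 : ℂ := Complex.exp (2 * Real.pi * Complex.I / 3)

/-- Forward transfer matrix of the Fourier walk at eigenvalue λ = i. -/
noncomputable def fourierTransfer : Matrix (Fin 3) (Fin 3) ℂ :=
  !![ω3, 0, 0;
     (-ω3 - 5) / (3 * ω3), (1 - ω3) / 3, (1 - ω3) / (3 * ω3);
     1 / (ω3 * (1 - ω3)), ω3 / (1 - ω3), 1 / (1 - ω3)]

/-! The vector `v = (α, 0, -α ω⁻²)` runs through the 3-cycle
`v ↦ (α ω, α (ω - ω²), -α ω) ↦ (α ω², α (ω - 1), -α ω) ↦ v` under `T⁺`. Each step is a rational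
identity in `ω` that reduces to zero modulo `ω² + ω + 1`, so it holds for a primitive cube root of
unity in any field. -/

open Matrix

def transferMatrix {K : Type*} [Field K] (ω : K) : Matrix (Fin 3) (Fin 3) K :=
  !![ω, 0, 0;
     (-ω - 5) / (3 * ω), (1 - ω) / 3, (1 - ω) / (3 * ω);
     1 / (ω * (1 - ω)), ω / (1 - ω), 1 / (1 - ω)]

theorem fourierTransfer_eq_transferMatrix : fourierTransfer = transferMatrix ω3 := rfl

theorem isPrimitiveRoot_ω3 : IsPrimitiveRoot ω3 3 :=
  Complex.isPrimitiveRoot_exp 3 (by norm_num)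

theorem transferMatrix_mulVec {K : Type*} [Field K] (ω a b c : K) :
    transferMatrix ω *ᵥ ![a, b, c]
      = ![ω * a,
          (-ω - 5) / (3 * ω) * a + (1 - ω) / 3 * b + (1 - ω) / (3 * ω) * c,
          1 / (ω * (1 - ω)) * a + ω / (1 - ω) * b + 1 / (1 - ω) * c] := by
  ext i
  fin_cases i <;> simp [transferMatrix] <;> ring

namespace IsPrimitiveRoot

variable {K : Type*} [Field K] {ω : K} (hω : IsPrimitiveRoot ω 3)
include hω

theorem sq_add_self_add_one : ω ^ 2 + ω + 1 = 0 := by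
  have h := hω.geom_sum_eq_zero (by norm_num)
  simp only [Finset.sum_range_succ, Finset.sum_range_zero, pow_zero, pow_one, zero_add] at h
  linear_combination h

theorem transferMatrix_mulVec_cycle (α : K) :
    transferMatrix ω *ᵥ ![α, 0, -α * (ω ^ 2)⁻¹] = ![α * ω, α * (ω - ω ^ 2), -α * ω] ∧
    transferMatrix ω *ᵥ ![α * ω, α * (ω - ω ^ 2), -α * ω]
      = ![α * ω ^ 2, α * (ω - 1), -α * ω] ∧
    transferMatrix ω *ᵥ ![α * ω ^ 2, α * (ω - 1), -α * ω] = ![α, 0, -α * (ω ^ 2)⁻¹] := by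
  have hs := hω.sq_add_self_add_one
  have : ω ≠ 0 := hω.ne_zero (by norm_num)
  have : 1 - ω ≠ 0 := sub_ne_zero.mpr (hω.ne_one (by norm_num)).symm
  have : (3 : K) ≠ 0 := by exact_mod_cast hω.neZero'.out
  simp only [transferMatrix_mulVec]
  refine ⟨vec3_eq (by ring) ?_ ?_, vec3_eq (by ring) ?_ ?_,
    vec3_eq (by linear_combination α * (ω - 1) * hs) ?_ ?_⟩ <;> field_simp
  · linear_combination α * (-1 + 2 * ω - 6 * ω ^ 2 + 3 * ω ^ 3) * hs
  · linear_combination α * (-1 + 2 * ω - ω ^ 2) * hs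
  · linear_combination α * (-3 + ω) * hs
  · linear_combination α * (1 - ω) * hs
  · linear_combination -2 * α * hs
  · linear_combination α * (1 - 2 * ω + ω ^ 2) * hs

theorem transferMatrix_pow_three_mulVec (α : K) :
    (transferMatrix ω ^ 3) *ᵥ ![α, 0, -α * (ω ^ 2)⁻¹] = ![α, 0, -α * (ω ^ 2)⁻¹] := by
  obtain ⟨h₀, h₁, h₂⟩ := hω.transferMatrix_mulVec_cycle α
  rw [pow_three, ← mulVec_mulVec, ← mulVec_mulVec, h₀, h₁, h₂]

end IsPrimitiveRoot

theorem fourier_transfer_cube_fixes_vector (α : ℂ) :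
    (fourierTransfer ^ 3).mulVec ![α, 0, -α * (ω3 ^ 2)⁻¹]
      = ![α, 0, -α * (ω3 ^ 2)⁻¹] := by
  rw [fourierTransfer_eq_transferMatrix]
  exact isPrimitiveRoot_ω3.transferMatrix_pow_three_mulVec α
end
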